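/- arXiv:1102.1944 — 2 statements merged into one kernel-verified Lean document; each statement's English description precedes it below -/
import Mathlib

section
/- Let $\nu > 0$, $c_0 > 0$, $T > 0$, $1 < r < \infty$. Suppose $u : [0,T] \to L^2(\mathbb{R}^3)$ has Littlewood-Paley projections $u_q(t)$; suppose $\Lambda(t) = 2^{Q(t)}$ satisfies $\|u_{Q(t)}(t)\|_{L^\infty} \geq c_0 \nu \Lambda(t)$ on $U = \{t : \Lambda(t) > 1\}$; that $\int_0^T \|u(t)\|_{L^2}\, dt < \infty$; and that $\int_0^T \big(\sup_q 2^{q(2/r - 1)}\|u_q(t)\|_{L^\infty}\big)^r dt < \infty$. Then $f(t) = \sup_{q \leq Q(t)} 2^q\|u_q(t)\|_{L^\infty}$ satisfies $f \in L^1(0,T)$. -/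
open MeasureTheory FourierTransform Real Set
open scoped ENNReal

noncomputable section

abbrev Rn (n : ℕ) := EuclideanSpace ℝ (Fin n)
abbrev V3 := EuclideanSpace ℂ (Fin 3)

/-- A smooth radial Littlewood-Paley cutoff function `χ` supported in the unit ball,
equal to `1` on the ball of radius `1/2`. -/
structure LPCutoff (n : ℕ) where
  toFun : Rn n → ℝ
  smooth : ContDiff ℝ (⊤ : ℕ∞) toFun
  radial : ∀ x y : Rn n, ‖x‖ = ‖y‖ → toFun x = toFun y
  zero_of_one_le : ∀ x : Rn n, 1 ≤ ‖x‖ → toFun x = 0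
  eq_one_of_le_half : ∀ x : Rn n, ‖x‖ ≤ 1 / 2 → toFun x = 1
  nonneg : ∀ x, 0 ≤ toFun x

/-- The symbol of the `q`-th Littlewood-Paley projection: `χ` for `q = -1`,
`φ(2^{-q} ξ) = χ(2^{-q-1} ξ) - χ(2^{-q} ξ)` for `q ≥ 0`, and `0` for `q < -1`. -/
def lpSymbol {n : ℕ} (C : LPCutoff n) (q : ℤ) (ξ : Rn n) : ℝ :=
  if q = -1 then C.toFun ξ
  else if 0 ≤ q then C.toFun ((2:ℝ) ^ (-(q+1)) • ξ) - C.toFun ((2:ℝ) ^ (-q) • ξ)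
  else 0

/-- The `q`-th Littlewood-Paley projection `u_q = 𝓕⁻¹(φ_q) * u`. -/
def lpProj {n : ℕ} {E : Type*} [NormedAddCommGroup E] [NormedSpace ℂ E] [CompleteSpace E]
    (C : LPCutoff n) (q : ℤ) (u : Rn n → E) : Rn n → E :=
  fun x => ∫ y : Rn n, (𝓕⁻ (fun ξ : Rn n => (lpSymbol C q ξ : ℂ)) (x - y)) • u y

/-- The (inhomogeneous) Sobolev norm `‖u‖_{H^s} = (∑_q (2^{qs} ‖u_q‖_{L²})²)^{1/2}`. -/
def hsNorm {n : ℕ} {E : Type*} [NormedAddCommGroup E] [NormedSpace ℂ E] [CompleteSpace E]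
    (C : LPCutoff n) (s : ℝ) (u : Rn n → E) : ℝ≥0∞ :=
  (∑' q : ℤ, (ENNReal.ofReal ((2:ℝ) ^ ((q:ℝ) * s)) * eLpNorm (lpProj C q u) 2 volume) ^ 2)
    ^ ((1:ℝ)/2)

/-- The Besov norm `‖u‖_{B^σ_{p,∞}} = sup_q 2^{qσ} ‖u_q‖_{L^p}`. -/
def besovNorm {n : ℕ} {E : Type*} [NormedAddCommGroup E] [NormedSpace ℂ E] [CompleteSpace E]
    (C : LPCutoff n) (σ : ℝ) (p : ℝ≥0∞) (u : Rn n → E) : ℝ≥0∞ :=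
  ⨆ q : ℤ, ENNReal.ofReal ((2:ℝ) ^ ((q:ℝ) * σ)) * eLpNorm (lpProj C q u) p volume

/-- `f = sup_{q ≤ Q} 2^q ‖u_q‖_∞`. -/
def fLow {E : Type*} [NormedAddCommGroup E] [NormedSpace ℂ E] [CompleteSpace E]
    (C : LPCutoff 3) (Q : ℕ) (u : Rn 3 → E) : ℝ≥0∞ :=
  ⨆ q : {q : ℤ // q ≤ (Q:ℤ)}, ENNReal.ofReal ((2:ℝ) ^ (q.1)) * eLpNorm (lpProj C q.1 u) ⊤ volume

def logPlus (x : ℝ) : ℝ := max (Real.log x) 0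

def pderiv (i : Fin 3) (f : Rn 3 → ℂ) : Rn 3 → ℂ :=
  fun x => fderiv ℝ f x (EuclideanSpace.single i 1)

/-- `∂^α` for a multi-index `α`. -/
def mderiv (α : Fin 3 → ℕ) (f : Rn 3 → ℂ) : Rn 3 → ℂ :=
  (pderiv 0)^[α 0] ((pderiv 1)^[α 1] ((pderiv 2)^[α 2] f))

/-- The low-frequency Besov `B¹_{∞,∞}` norm `sup_{q ≤ Q} 2^q ‖u_q‖_∞` as a real number. -/
def besovLow (C : LPCutoff 3) (Q : ℕ) (u : Rn 3 → V3) : ℝ :=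
  ⨆ q : {q : ℤ // q ≤ (Q:ℤ)}, (2:ℝ) ^ (q.1) * (eLpNorm (lpProj C q.1 u) ⊤ volume).toReal


/-- the Ladyzhenskaya-Prodi-Serrin-type condition
`u ∈ L^r((0,T); B^{2/r-1}_{∞,∞})` together with `u ∈ L¹_t L²_x` and the reverse bound
`‖u_{Q(t)}‖_∞ ≥ c₀ ν Λ(t)` on `{Λ > 1}` implies `f = sup_{q ≤ Q(t)} 2^q ‖u_q‖_∞ ∈ L¹(0,T)`. -/
theorem stmt5 (ν c₀ T r : ℝ) (hν : 0 < ν) (hc : 0 < c₀) (hT : 0 < T) (hr : 1 < r)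
    (C : LPCutoff 3) (u : ℝ → Rn 3 → V3) (hu : ∀ t, MemLp (u t) 2 volume)
    (Q : ℝ → ℕ)
    (hrev : ∀ t ∈ Ioc (0:ℝ) T, 1 ≤ Q t →
      ENNReal.ofReal (c₀ * ν * (2:ℝ) ^ (Q t)) ≤ eLpNorm (lpProj C (Q t) (u t)) ⊤ volume)
    (hL2 : ∫⁻ t in Ioc 0 T, eLpNorm (u t) 2 volume < ⊤)
    (hLPS : ∫⁻ t in Ioc 0 T,
      (⨆ q : ℤ, ENNReal.ofReal ((2:ℝ) ^ ((q:ℝ) * (2/r - 1))) *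
        eLpNorm (lpProj C q (u t)) ⊤ volume) ^ r < ⊤) :
    ∫⁻ t in Ioc 0 T, fLow C (Q t) (u t) < ⊤ := by
  have hr0 : (0:ℝ) < r := lt_trans one_pos hr
  have hcν : (0:ℝ) < c₀ * ν := mul_pos hc hν
  set σ : ℝ := 2 / r - 1 with hσ
  set B : ℝ → ℝ≥0∞ := fun t => ⨆ q : ℤ, ENNReal.ofReal ((2:ℝ) ^ ((q:ℝ) * σ)) *
    eLpNorm (lpProj C q (u t)) ⊤ volume with hBdef
  set c : ℝ≥0∞ := ENNReal.ofReal ((c₀ * ν) ^ (1 - r)) + 1 with hcdef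
  have hc1 : (1:ℝ≥0∞) ≤ c := le_add_self
  have hcne : c ≠ ⊤ := by
    rw [hcdef]; exact ENNReal.add_ne_top.2 ⟨ENNReal.ofReal_ne_top, ENNReal.one_ne_top⟩
  -- B ≤ 1 + B^r pointwise helper
  have hBsub : ∀ t, B t ≤ 1 + c * (B t) ^ r := by
    intro t
    rcases le_or_gt (B t) 1 with h | h
    · exact le_trans h (le_add_right le_rfl)
    · have h1 : B t = (B t) ^ (1:ℝ) := (ENNReal.rpow_one _).symm
      calc B t = (B t) ^ (1:ℝ) := h1
        _ ≤ (B t) ^ r := ENNReal.rpow_le_rpow_of_exponent_le h.le hr.le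
        _ ≤ c * (B t) ^ r := le_mul_of_one_le_left (zero_le (a := _)) hc1
        _ ≤ 1 + c * (B t) ^ r := le_add_self
  have key : ∀ t ∈ Ioc (0:ℝ) T, fLow C (Q t) (u t) ≤ 1 + c * (B t) ^ r := by
    intro t ht
    refine iSup_le ?_
    rintro ⟨q, hq⟩
    by_cases hQ : 1 ≤ Q t
    · -- high-frequency case
      have H := hrev t ht hQ
      set E : ℤ → ℝ≥0∞ := fun p => eLpNorm (lpProj C p (u t)) ⊤ volume with hE
      have hQR : ((Q t : ℤ) : ℝ) = (Q t : ℝ) := by push_cast; ring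
      -- Step B : ofReal (c₀ν) * ofReal (2^{Q·2/r}) ≤ B t
      have stepB : ENNReal.ofReal (c₀ * ν) * ENNReal.ofReal ((2:ℝ) ^ ((Q t : ℝ) * (2/r)))
          ≤ B t := by
        have e1 : (2:ℝ) ^ ((Q t : ℝ) * (2/r)) =
            (2:ℝ) ^ ((Q t : ℝ) * σ) * (2:ℝ) ^ (Q t : ℕ) := by
          rw [← Real.rpow_natCast 2 (Q t), ← Real.rpow_add two_pos]
          rw [hσ]; ring_nf
        have e2 : ENNReal.ofReal (c₀ * ν) * ENNReal.ofReal ((2:ℝ) ^ ((Q t : ℝ) * (2/r)))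
            = ENNReal.ofReal ((2:ℝ) ^ ((Q t : ℝ) * σ)) *
              ENNReal.ofReal (c₀ * ν * (2:ℝ) ^ (Q t : ℕ)) := by
          rw [e1, ← ENNReal.ofReal_mul hcν.le, ← ENNReal.ofReal_mul (by positivity)]
          ring_nf
        rw [e2]
        calc ENNReal.ofReal ((2:ℝ) ^ ((Q t : ℝ) * σ)) *
              ENNReal.ofReal (c₀ * ν * (2:ℝ) ^ (Q t : ℕ))
            ≤ ENNReal.ofReal ((2:ℝ) ^ ((Q t : ℝ) * σ)) * E (Q t) :=
              mul_le_mul_right H _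
          _ ≤ B t := by
              rw [hBdef]
              have := le_iSup (fun p : ℤ => ENNReal.ofReal ((2:ℝ) ^ ((p:ℝ) * σ)) * E p)
                ((Q t : ℤ))
              rw [hQR] at this; exact this
      -- K ≤ ofReal((c₀ν)⁻¹) * B t
      have stepK : ENNReal.ofReal ((2:ℝ) ^ ((Q t : ℝ) * (2/r)))
          ≤ ENNReal.ofReal ((c₀ * ν)⁻¹) * B t := by
        have := mul_le_mul_right stepB (ENNReal.ofReal ((c₀ * ν)⁻¹))
        calc ENNReal.ofReal ((2:ℝ) ^ ((Q t : ℝ) * (2/r)))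
            = ENNReal.ofReal ((c₀ * ν)⁻¹) * (ENNReal.ofReal (c₀ * ν) *
                ENNReal.ofReal ((2:ℝ) ^ ((Q t : ℝ) * (2/r)))) := by
              rw [← mul_assoc, ← ENNReal.ofReal_mul (by positivity),
                inv_mul_cancel₀ hcν.ne', ENNReal.ofReal_one, one_mul]
          _ ≤ ENNReal.ofReal ((c₀ * ν)⁻¹) * B t := this
      -- Step C : ofReal(2^{Q(1-σ)}) ≤ ofReal((c₀ν)^{1-r}) * B^{r-1}
      have stepC : ENNReal.ofReal ((2:ℝ) ^ ((Q t : ℝ) * (1 - σ)))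
          ≤ ENNReal.ofReal ((c₀ * ν) ^ (1 - r)) * (B t) ^ (r - 1) := by
        have e3 : (2:ℝ) ^ ((Q t : ℝ) * (1 - σ)) =
            ((2:ℝ) ^ ((Q t : ℝ) * (2/r))) ^ (r - 1) := by
          rw [← Real.rpow_mul (by norm_num : (0:ℝ) ≤ 2)]
          congr 1
          rw [hσ]
          field_simp
          ring
        rw [e3, ← ENNReal.ofReal_rpow_of_pos (Real.rpow_pos_of_pos two_pos _)]
        calc (ENNReal.ofReal ((2:ℝ) ^ ((Q t : ℝ) * (2/r)))) ^ (r - 1)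
            ≤ (ENNReal.ofReal ((c₀ * ν)⁻¹) * B t) ^ (r - 1) :=
              ENNReal.rpow_le_rpow stepK (by linarith)
          _ = (ENNReal.ofReal ((c₀ * ν)⁻¹)) ^ (r - 1) * (B t) ^ (r - 1) :=
              ENNReal.mul_rpow_of_nonneg _ _ (by linarith)
          _ = ENNReal.ofReal ((c₀ * ν) ^ (1 - r)) * (B t) ^ (r - 1) := by
              congr 1
              rw [ENNReal.ofReal_rpow_of_pos (by positivity),
                Real.inv_rpow hcν.le, ← Real.rpow_neg hcν.le]
              congr 1
              ring
      -- term bound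
      have hq1σ : (q:ℝ) * (1 - σ) ≤ (Q t : ℝ) * (1 - σ) := by
        have h1σ : (0:ℝ) < 1 - σ := by
          rw [hσ]
          have : 2 / r < 2 := by rw [div_lt_iff₀ hr0]; nlinarith
          linarith
        have : (q:ℝ) ≤ (Q t : ℝ) := by exact_mod_cast hq
        nlinarith
      have e4 : ENNReal.ofReal ((2:ℝ) ^ q) =
          ENNReal.ofReal ((2:ℝ) ^ ((q:ℝ) * (1 - σ))) *
          ENNReal.ofReal ((2:ℝ) ^ ((q:ℝ) * σ)) := by
        rw [← ENNReal.ofReal_mul (by positivity), ← Real.rpow_add two_pos,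
          ← Real.rpow_intCast 2 q]
        ring_nf
      calc ENNReal.ofReal ((2:ℝ) ^ q) * E q
          = ENNReal.ofReal ((2:ℝ) ^ ((q:ℝ) * (1 - σ))) *
            (ENNReal.ofReal ((2:ℝ) ^ ((q:ℝ) * σ)) * E q) := by rw [e4, mul_assoc]
        _ ≤ ENNReal.ofReal ((2:ℝ) ^ ((Q t : ℝ) * (1 - σ))) * B t := by
            refine mul_le_mul' (ENNReal.ofReal_le_ofReal ?_) ?_
            · exact Real.rpow_le_rpow_of_exponent_le (by norm_num) hq1σ
            · exact le_iSup (fun p : ℤ => ENNReal.ofReal ((2:ℝ) ^ ((p:ℝ) * σ)) * E p) q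
        _ ≤ ENNReal.ofReal ((c₀ * ν) ^ (1 - r)) * (B t) ^ (r - 1) * B t :=
            mul_le_mul_left stepC _
        _ = ENNReal.ofReal ((c₀ * ν) ^ (1 - r)) * (B t) ^ r := by
            rw [mul_assoc]
            congr 1
            have h5 : B t ^ (r - 1) * B t ^ (1:ℝ) = B t ^ r := by
              rw [← ENNReal.rpow_add_of_nonneg _ _ (by linarith) zero_le_one]
              norm_num
            rw [← h5, ENNReal.rpow_one]
        _ ≤ c * (B t) ^ r := by
            exact mul_le_mul_left (by rw [hcdef]; exact self_le_add_right _ _) _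
        _ ≤ 1 + c * (B t) ^ r := le_add_self
    · -- low case : Q t = 0
      have hQ0 : Q t = 0 := by omega
      have hq0 : (q:ℝ) ≤ 0 := by
        have : q ≤ 0 := by rw [hQ0] at hq; exact_mod_cast hq
        exact_mod_cast this
      have hqσ : (q:ℝ) ≤ (q:ℝ) * σ := by
        have h1 : σ - 1 ≤ 0 := by
          rw [hσ]
          have h2r : 2 / r ≤ 2 := by rw [div_le_iff₀ hr0]; nlinarith
          linarith
        nlinarith [mul_nonneg (neg_nonneg.2 hq0) (neg_nonneg.2 h1)]
      calc ENNReal.ofReal ((2:ℝ) ^ q) * eLpNorm (lpProj C q (u t)) ⊤ volume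
          ≤ ENNReal.ofReal ((2:ℝ) ^ ((q:ℝ) * σ)) * eLpNorm (lpProj C q (u t)) ⊤ volume := by
            refine mul_le_mul_left (ENNReal.ofReal_le_ofReal ?_) _
            rw [← Real.rpow_intCast 2 q]
            exact Real.rpow_le_rpow_of_exponent_le (by norm_num) hqσ
        _ ≤ B t := le_iSup (fun p : ℤ => ENNReal.ofReal ((2:ℝ) ^ ((p:ℝ) * σ)) *
              eLpNorm (lpProj C p (u t)) ⊤ volume) q
        _ ≤ 1 + c * (B t) ^ r := hBsub t
  calc ∫⁻ t in Ioc 0 T, fLow C (Q t) (u t)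
      ≤ ∫⁻ t in Ioc 0 T, (1 + c * (B t) ^ r) :=
        lintegral_mono_ae ((ae_restrict_iff' measurableSet_Ioc).2 (Filter.Eventually.of_forall key))
    _ = (∫⁻ _ in Ioc 0 T, (1:ℝ≥0∞)) + ∫⁻ t in Ioc 0 T, c * (B t) ^ r :=
        lintegral_add_left measurable_const _
    _ = ENNReal.ofReal T + c * ∫⁻ t in Ioc 0 T, (B t) ^ r := by
        rw [setLIntegral_const, lintegral_const_mul' _ _ hcne, one_mul, Real.volume_Ioc,
          sub_zero]
    _ < ⊤ := by
        refine ENNReal.add_lt_top.2 ⟨ENNReal.ofReal_lt_top, ?_⟩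
        exact ENNReal.mul_lt_top hcne.lt_top hLPS

end
end

section
/- Let $0 \leq s < 3/2$, $\nu > 0$, $c_0 > 0$. Suppose on the set $U = \{t \in [0,T] : \Lambda(t) > 1\}$ we have $\|u_{Q(t)}(t)\|_{L^\infty} \geq c_0 \nu \Lambda(t)$ (with $\Lambda = 2^Q$), and suppose the intermittency bound $\int_U \Lambda(t)^{2-s}\|u_{Q(t)}(t)\|_{L^\infty}^2\, dt \leq C_1 \int_U \Lambda(t)^2 \|u_{Q(t)}(t)\|_{L^2}^2\, dt < \infty$ holds. Then $\int_U \Lambda(t)^{5/2}\, dt < \infty$, i.e. $\Lambda \in L^{5/2}(0,T)$. -/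
open MeasureTheory FourierTransform Real Set
open scoped ENNReal

noncomputable section

/-- if `0 ≤ s < 3/2`, the reverse bound holds on `U = {Λ > 1}`
and the intermittency bound
`∫_U Λ^{2-s} ‖u_Q‖_∞² ≤ C₁ ∫_U Λ² ‖u_Q‖_₂² < ∞` holds, then `Λ ∈ L^{5/2}(0,T)`. -/
theorem stmt7 (s ν c₀ T C₁ : ℝ) (hs0 : 0 ≤ s) (hs : s < 3/2) (hν : 0 < ν) (hc : 0 < c₀)
    (hT : 0 < T) (hC₁ : 0 < C₁)
    (C : LPCutoff 3) (u : ℝ → Rn 3 → V3) (Q : ℝ → ℕ)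
    (hrev : ∀ t ∈ Icc (0:ℝ) T, 1 ≤ Q t →
      ENNReal.ofReal (c₀ * ν * (2:ℝ) ^ (Q t)) ≤ eLpNorm (lpProj C (Q t) (u t)) ⊤ volume)
    (hint : (∫⁻ t in {t | t ∈ Icc (0:ℝ) T ∧ 1 ≤ Q t},
        ENNReal.ofReal (((2:ℝ) ^ (Q t)) ^ (2 - s)) *
          (eLpNorm (lpProj C (Q t) (u t)) ⊤ volume) ^ 2) ≤
      ENNReal.ofReal C₁ * ∫⁻ t in {t | t ∈ Icc (0:ℝ) T ∧ 1 ≤ Q t},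
        ENNReal.ofReal (((2:ℝ) ^ (Q t)) ^ 2) *
          (eLpNorm (lpProj C (Q t) (u t)) 2 volume) ^ 2)
    (hfin : (∫⁻ t in {t | t ∈ Icc (0:ℝ) T ∧ 1 ≤ Q t},
        ENNReal.ofReal (((2:ℝ) ^ (Q t)) ^ 2) *
          (eLpNorm (lpProj C (Q t) (u t)) 2 volume) ^ 2) < ⊤) :
    ∫⁻ t in Icc (0:ℝ) T, ENNReal.ofReal (((2:ℝ) ^ (Q t)) ^ ((5:ℝ)/2)) < ⊤ := by
  classical
  set Λ : ℝ → ℝ := fun t => (2:ℝ) ^ (Q t) with hΛ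
  set N : ℝ → ℝ≥0∞ := fun t => eLpNorm (lpProj C (Q t) (u t)) ⊤ volume with hN
  have hcν : 0 < c₀ * ν := mul_pos hc hν
  set k : ℝ≥0∞ := (ENNReal.ofReal ((c₀ * ν) ^ 2))⁻¹ with hk
  have hofpos : 0 < ENNReal.ofReal ((c₀ * ν) ^ 2) := ENNReal.ofReal_pos.2 (pow_pos hcν 2)
  have hkmul : k * ENNReal.ofReal ((c₀ * ν) ^ 2) = 1 :=
    ENNReal.inv_mul_cancel hofpos.ne' ENNReal.ofReal_ne_top
  have hk_ne_top : k ≠ ⊤ := by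
    simp [hk, hofpos.ne']
  set U' : Set ℝ := {t | 1 ≤ Q t} with hU'
  set g : ℝ → ℝ≥0∞ := fun t => k * (ENNReal.ofReal ((Λ t) ^ (2 - s)) * (N t) ^ 2) with hg
  have hΛ1 : ∀ t, (1:ℝ) ≤ Λ t := fun t => one_le_pow₀ one_le_two
  have hΛ0 : ∀ t, (0:ℝ) < Λ t := fun t => lt_of_lt_of_le one_pos (hΛ1 t)
  -- pointwise bound on Icc
  have hpt : ∀ t ∈ Icc (0:ℝ) T,
      ENNReal.ofReal ((Λ t) ^ ((5:ℝ)/2)) ≤ 1 + U'.indicator g t := by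
    intro t ht
    by_cases h1 : 1 ≤ Q t
    · have hind : U'.indicator g t = g t := Set.indicator_of_mem (show t ∈ U' from h1) g
      rw [hind]
      refine le_add_left ?_
      -- real inequality : Λ^{5/2} ≤ Λ^{2-s} * Λ^2
      have hexp : (1:ℝ)/2 ≤ 2 - s := by linarith
      have hreal : (Λ t) ^ ((5:ℝ)/2) ≤ (Λ t) ^ (2 - s) * (Λ t) ^ (2:ℕ) := by
        have h1' : (Λ t) ^ ((5:ℝ)/2) = (Λ t) ^ ((1:ℝ)/2) * (Λ t) ^ ((2:ℝ)) := by
          rw [← Real.rpow_add (hΛ0 t)]; norm_num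
        rw [h1']
        have h2' : (Λ t) ^ ((1:ℝ)/2) ≤ (Λ t) ^ (2 - s) :=
          Real.rpow_le_rpow_of_exponent_le (hΛ1 t) hexp
        have h3' : (Λ t) ^ ((2:ℝ)) = (Λ t) ^ (2:ℕ) := by
          rw [← Real.rpow_natCast]; norm_num
        rw [← h3']
        exact mul_le_mul_of_nonneg_right h2' (Real.rpow_nonneg (hΛ0 t).le 2)
      -- from hrev
      have hrev' : ENNReal.ofReal (c₀ * ν * Λ t) ≤ N t := hrev t ht h1
      have hrev2 : ENNReal.ofReal ((c₀ * ν * Λ t) ^ 2) ≤ (N t) ^ 2 := by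
        rw [show ((c₀ * ν * Λ t) ^ 2 : ℝ) = (c₀ * ν * Λ t) * (c₀ * ν * Λ t) by ring,
          ENNReal.ofReal_mul (by positivity), sq]
        exact mul_le_mul' hrev' hrev'
      calc ENNReal.ofReal ((Λ t) ^ ((5:ℝ)/2))
          ≤ ENNReal.ofReal ((Λ t) ^ (2 - s) * (Λ t) ^ (2:ℕ)) := ENNReal.ofReal_le_ofReal hreal
        _ = k * (ENNReal.ofReal ((c₀ * ν) ^ 2) *
              ENNReal.ofReal ((Λ t) ^ (2 - s) * (Λ t) ^ (2:ℕ))) := by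
            rw [← mul_assoc, hkmul, one_mul]
        _ = k * (ENNReal.ofReal ((Λ t) ^ (2 - s)) * ENNReal.ofReal ((c₀ * ν * Λ t) ^ 2)) := by
            rw [← ENNReal.ofReal_mul (by positivity), ← ENNReal.ofReal_mul (by positivity)]
            ring_nf
        _ ≤ g t := by
            refine mul_le_mul_right (mul_le_mul_right hrev2 _) k
    · have hQ0 : Q t = 0 := by omega
      have : ENNReal.ofReal ((Λ t) ^ ((5:ℝ)/2)) = 1 := by
        simp [hΛ, hQ0, Real.one_rpow]
      rw [this]
      exact le_add_right le_rfl
  -- integrate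
  have hmeas : MeasurableSet (Icc (0:ℝ) T) := measurableSet_Icc
  have step1 : ∫⁻ t in Icc (0:ℝ) T, ENNReal.ofReal ((Λ t) ^ ((5:ℝ)/2))
      ≤ ∫⁻ t in Icc (0:ℝ) T, (1 + U'.indicator g t) := by
    refine lintegral_mono_ae ?_
    filter_upwards [ae_restrict_mem hmeas] with t ht using hpt t ht
  have step2 : ∫⁻ t in Icc (0:ℝ) T, (1 + U'.indicator g t)
      = volume (Icc (0:ℝ) T) + ∫⁻ t in Icc (0:ℝ) T, U'.indicator g t := by
    rw [lintegral_add_left measurable_const, setLIntegral_const, one_mul]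
  have step3 : ∫⁻ t in Icc (0:ℝ) T, U'.indicator g t
      ≤ ∫⁻ t in {t | t ∈ Icc (0:ℝ) T ∧ 1 ≤ Q t}, g t := by
    refine le_trans (lintegral_indicator_le _ _) (le_of_eq ?_)
    rw [Measure.restrict_restrict' hmeas,
      show U' ∩ Icc (0:ℝ) T = {t | t ∈ Icc (0:ℝ) T ∧ 1 ≤ Q t} from by
        ext t; simp [hU', Set.mem_Icc]; tauto]
  have step4 : ∫⁻ t in {t | t ∈ Icc (0:ℝ) T ∧ 1 ≤ Q t}, g t
      = k * ∫⁻ t in {t | t ∈ Icc (0:ℝ) T ∧ 1 ≤ Q t},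
          ENNReal.ofReal ((Λ t) ^ (2 - s)) * (N t) ^ 2 :=
    lintegral_const_mul' _ _ hk_ne_top
  have hfin2 : k * ∫⁻ t in {t | t ∈ Icc (0:ℝ) T ∧ 1 ≤ Q t},
      ENNReal.ofReal ((Λ t) ^ (2 - s)) * (N t) ^ 2 < ⊤ := by
    refine ENNReal.mul_lt_top hk_ne_top.lt_top ?_
    exact lt_of_le_of_lt hint (ENNReal.mul_lt_top ENNReal.ofReal_lt_top hfin)
  calc ∫⁻ t in Icc (0:ℝ) T, ENNReal.ofReal ((Λ t) ^ ((5:ℝ)/2))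
      ≤ volume (Icc (0:ℝ) T) + ∫⁻ t in Icc (0:ℝ) T, U'.indicator g t := by
        rw [← step2]; exact step1
    _ ≤ volume (Icc (0:ℝ) T) + k * ∫⁻ t in {t | t ∈ Icc (0:ℝ) T ∧ 1 ≤ Q t},
          ENNReal.ofReal ((Λ t) ^ (2 - s)) * (N t) ^ 2 := by
        exact add_le_add_right (step3.trans step4.le) _
    _ < ⊤ := ENNReal.add_lt_top.2 ⟨by simp [Real.volume_Icc], hfin2⟩

end
end
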